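/- arXiv:1606.03806 — 3 statements merged into one kernel-verified Lean document; each statement's English description precedes it below -/
import Mathlib

section
/- Let (s₁^{(m)}, s₂^{(m)}) be a sequence of complex pairs with ζ₂(s₁^{(m)}, s₂^{(m)}) = 0 for all m, such that Re(s₁^{(m)}) → +∞ and the s₂^{(m)} stay in a compact set K contained in the half-plane Re(s₂) > 1. Then every limit point ρ of the sequence (s₂^{(m)}) satisfies ζ(ρ) = 1. -/
noncomputable def zeta2term (s₁ s₂ : ℂ) (n : ℕ × ℕ) : ℂ :=
  ((n.1 : ℂ) + 1) ^ (-s₁) * ((n.1 : ℂ) + (n.2 : ℂ) + 2) ^ (-s₂)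

noncomputable def zeta2 (s₁ s₂ : ℂ) : ℂ := ∑' n : ℕ × ℕ, zeta2term s₁ s₂ n

/-! Along the subsequence, the term of the double series at `(n₁, n₂)` tends to `(n₂ + 2)^{-ρ}`
when `n₁ = 0` and to `0` otherwise, because `(n₁ + 1)^{-s₁} → 0` once `Re s₁ → ∞`. Eventually all
terms are dominated by `(n₁ + 1)^{-2} (n₂ + 1)^{-a}` with `1 < a < Re ρ`, so by dominated
convergence `ζ₂(s₁, s₂) → ∑ (n + 2)^{-ρ} = ζ(ρ) - 1`, which must therefore vanish. -/

open Filter Topology Complex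

lemma riemannZeta_sub_one_eq_tsum {s : ℂ} (hs : 1 < s.re) :
    riemannZeta s - 1 = ∑' n : ℕ, ((n : ℂ) + 2) ^ (-s) := by
  have hsum : Summable fun n : ℕ => 1 / ((n : ℂ) + 1) ^ s := by
    simpa using (summable_nat_add_iff 1).mpr (Complex.summable_one_div_nat_cpow.mpr hs)
  rw [zeta_eq_tsum_one_div_nat_add_one_cpow hs, hsum.tsum_eq_zero_add]
  simp only [Nat.cast_zero, zero_add, one_cpow, div_one, add_sub_cancel_left, Nat.cast_add,
    Nat.cast_one, one_div, cpow_neg]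
  congr! 4
  ring

lemma tendsto_natCast_cpow_neg_of_re_tendsto_atTop {ι : Type*} {l : Filter ι} {s : ι → ℂ}
    (hs : Tendsto (fun i => (s i).re) l atTop) {k : ℕ} (hk : 1 < k) :
    Tendsto (fun i => (k : ℂ) ^ (-s i)) l (𝓝 0) := by
  rw [tendsto_zero_iff_norm_tendsto_zero]
  simp only [norm_natCast_cpow_of_pos (by omega : 0 < k), neg_re]
  exact (tendsto_rpow_atBot_of_base_gt_one _ (by exact_mod_cast hk)).comp
    (tendsto_neg_atTop_atBot.comp hs)

lemma norm_zeta2term (s₁ s₂ : ℂ) (n : ℕ × ℕ) :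
    ‖zeta2term s₁ s₂ n‖ =
      ((n.1 + 1 : ℕ) : ℝ) ^ (-s₁.re) * ((n.1 + n.2 + 2 : ℕ) : ℝ) ^ (-s₂.re) := by
  rw [← neg_re, ← neg_re, ← norm_natCast_cpow_of_pos (Nat.succ_pos _),
    ← norm_natCast_cpow_of_pos (by omega : 0 < n.1 + n.2 + 2), zeta2term, norm_mul]
  push_cast
  ring_nf

lemma norm_zeta2term_le {a b : ℝ} (ha : 0 ≤ a) {s₁ s₂ : ℂ}
    (h₁ : b ≤ s₁.re) (h₂ : a ≤ s₂.re) (n : ℕ × ℕ) :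
    ‖zeta2term s₁ s₂ n‖ ≤ ((n.1 + 1 : ℕ) : ℝ) ^ (-b) * ((n.2 + 1 : ℕ) : ℝ) ^ (-a) := by
  rw [norm_zeta2term]
  gcongr ?_ * ?_
  · gcongr
    exact_mod_cast Nat.le_add_left 1 n.1
  · calc ((n.1 + n.2 + 2 : ℕ) : ℝ) ^ (-s₂.re) ≤ ((n.2 + 1 : ℕ) : ℝ) ^ (-s₂.re) := by
          refine Real.rpow_le_rpow_of_nonpos (by positivity) ?_ (by linarith)
          exact_mod_cast (by omega : n.2 + 1 ≤ n.1 + n.2 + 2)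
      _ ≤ ((n.2 + 1 : ℕ) : ℝ) ^ (-a) := by
          gcongr
          · exact_mod_cast Nat.le_add_left 1 n.2

lemma summable_natCast_add_one_rpow_mul {a b : ℝ} (ha : 1 < a) (hb : 1 < b) :
    Summable fun n : ℕ × ℕ => ((n.1 + 1 : ℕ) : ℝ) ^ (-b) * ((n.2 + 1 : ℕ) : ℝ) ^ (-a) := by
  have hsum {c : ℝ} (hc : 1 < c) : Summable fun k : ℕ => ((k + 1 : ℕ) : ℝ) ^ (-c) :=
    (summable_nat_add_iff 1).mpr (Real.summable_nat_rpow.mpr (by linarith))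
  exact (hsum hb).mul_of_nonneg (hsum ha) (fun _ => by positivity) (fun _ => by positivity)

lemma tendsto_zeta2term {ι : Type*} {l : Filter ι} {s₁ s₂ : ι → ℂ} {ρ : ℂ}
    (h₁ : Tendsto (fun i => (s₁ i).re) l atTop) (h₂ : Tendsto s₂ l (𝓝 ρ)) (n : ℕ × ℕ) :
    Tendsto (fun i => zeta2term (s₁ i) (s₂ i) n) l
      (𝓝 (if n.1 = 0 then ((n.2 : ℂ) + 2) ^ (-ρ) else 0)) := by
  have hsecond : Tendsto (fun i => ((n.1 : ℂ) + n.2 + 2) ^ (-s₂ i)) l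
      (𝓝 (((n.1 : ℂ) + n.2 + 2) ^ (-ρ))) := by
    have : ((n.1 : ℂ) + n.2 + 2) ≠ 0 := by norm_cast
    exact ((continuous_id.const_cpow (.inl this)).tendsto _).comp h₂.neg
  rcases Nat.eq_zero_or_pos n.1 with h0 | hpos
  · simpa [zeta2term, h0] using hsecond
  · have hfirst : Tendsto (fun i => ((n.1 : ℂ) + 1) ^ (-s₁ i)) l (𝓝 0) := by
      exact_mod_cast tendsto_natCast_cpow_neg_of_re_tendsto_atTop h₁ (by omega : 1 < n.1 + 1)
    simpa [zeta2term, hpos.ne'] using hfirst.mul hsecond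

lemma tsum_ite_fst_eq_zero {α β M : Type*} [Zero α] [DecidableEq α] [AddCommMonoid M]
    [TopologicalSpace M] (f : β → M) :
    ∑' n : α × β, (if n.1 = 0 then f n.2 else 0) = ∑' k, f k := by
  rw [← (Prod.mk_right_injective 0).tsum_eq]
  · simp
  · rintro ⟨j, k⟩ h
    simp only [Function.mem_support, ne_eq, ite_eq_right_iff, not_forall] at h
    exact ⟨k, by simp [h.1]⟩

theorem tendsto_zeta2_of_re_tendsto_atTop {ι : Type*} {l : Filter ι} {s₁ s₂ : ι → ℂ} {ρ : ℂ}
    (h₁ : Tendsto (fun i => (s₁ i).re) l atTop) (h₂ : Tendsto s₂ l (𝓝 ρ)) (hρ : 1 < ρ.re) :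
    Tendsto (fun i => zeta2 (s₁ i) (s₂ i)) l (𝓝 (riemannZeta ρ - 1)) := by
  obtain ⟨a, ha, haρ⟩ := exists_between hρ
  have hre₂ : ∀ᶠ i in l, a < (s₂ i).re :=
    (continuous_re.tendsto ρ).comp h₂ |>.eventually (lt_mem_nhds haρ)
  rw [riemannZeta_sub_one_eq_tsum hρ, ← tsum_ite_fst_eq_zero (α := ℕ)]
  refine tendsto_tsum_of_dominated_convergence (summable_natCast_add_one_rpow_mul ha one_lt_two)
    (tendsto_zeta2term h₁ h₂) ?_
  filter_upwards [h₁.eventually_ge_atTop 2, hre₂] with i hi₁ hi₂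
  exact norm_zeta2term_le (by linarith) hi₁ hi₂.le

/-- If `(s₁⁽ᵐ⁾, s₂⁽ᵐ⁾)` are zeros of `ζ₂` with `Re s₁⁽ᵐ⁾ → +∞` and the `s₂⁽ᵐ⁾` staying
in a compact set `K ⊆ {Re > 1}`, then every limit point `ρ` of `(s₂⁽ᵐ⁾)` satisfies
`ζ(ρ) = 1`. -/
theorem limit_points_of_zero_sets (s₁ s₂ : ℕ → ℂ)
    (hzero : ∀ m, zeta2 (s₁ m) (s₂ m) = 0)
    (hre : Filter.Tendsto (fun m => (s₁ m).re) Filter.atTop Filter.atTop)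
    (K : Set ℂ) (hK : IsCompact K) (hK1 : K ⊆ {s : ℂ | 1 < s.re})
    (hmem : ∀ m, s₂ m ∈ K) :
    ∀ ρ : ℂ, (∃ φ : ℕ → ℕ, StrictMono φ ∧
        Filter.Tendsto (fun m => s₂ (φ m)) Filter.atTop (nhds ρ)) →
      riemannZeta ρ = 1 := by
  rintro ρ ⟨φ, hφ, hlim⟩
  have hρ : 1 < ρ.re := hK1 (hK.isClosed.mem_of_tendsto hlim (.of_forall fun m => hmem _))
  have hζ := tendsto_zeta2_of_re_tendsto_atTop (hre.comp hφ.tendsto_atTop) hlim hρ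
  simp only [hzero] at hζ
  exact sub_eq_zero.mp (tendsto_nhds_unique hζ tendsto_const_nhds)
end

section
/- For every r ≥ 2 and complex numbers s₁,…,s_r each with real part > 1, the harmonic product decomposition holds: ζ(s₁)·ζ_{r−1}(s₂,…,s_r) = ζ_r(s₁,s₂,…,s_r) + ζ_{r−1}(s₁+s₂,s₃,…,s_r) + ζ_r(s₂,s₁,s₃,…,s_r) + ζ_{r−1}(s₂,s₁+s₃,s₄,…,s_r) + … + ζ_r(s₂,…,s_{r−1},s₁,s_r) + ζ_{r−1}(s₂,…,s_{r−1},s₁+s_r) + ζ_r(s₂,…,s_{r−1},s_r,s₁), obtained by classifying the position of n₁ relative to the increasing tuple n₂ < ⋯ < n_r. -/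
/-!
Shift every index by one, so that an index of `ζ_r` is a strictly increasing tuple
`m : Fin r → ℕ`, standing for `m₁ + 1 < ⋯ < m_r + 1`; `ez` sums over the gaps between
consecutive entries instead, and partial sums convert one description into the other.

A pair `(a, m)` made of an index of `ζ(s₁)` and one of `ζ_{r-1}(t)` is of one of two kinds.
Either `a` differs from every `m_i`: then inserting `a` into `m` gives an increasing `r`-tuple
`M` in which `a` sits at a unique position `p`. Or `a = m_i` for a unique `i`. This (stuffle)
bijection turns the product term `(a + 1)^{-s₁} ∏ₖ (m_k + 1)^{-t_k}` into the term of `ζ_r` at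
`M` with `s₁` inserted into `t` at position `p`, respectively into the term of `ζ_{r-1}` at `m`
with `t_i` replaced by `s₁ + t_i`. All series converge absolutely, so the double series may be
rearranged along this bijection.
-/

/-- The Euler–Zagier `r`-fold zeta-function
`ζ_r(s₁,…,s_r) = Σ_{1 ≤ m₁ < ⋯ < m_r} m₁^{-s₁} ⋯ m_r^{-s_r}`, indexed over gaps
`n : Fin r → ℕ` via `m_k = (Σ_{i ≤ k} n_i) + k + 1`. -/
noncomputable def ez (r : ℕ) (s : Fin r → ℂ) : ℂ :=
  ∑' n : Fin r → ℕ, ∏ k : Fin r,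
    ((∑ i ∈ Finset.Iic k, (n i : ℂ)) + (k : ℕ) + 1) ^ (-(s k))

open Finset

theorem summable_prod_apply_of_nonneg {ι β : Type*} [Fintype ι] {f : ι → β → ℝ}
    (hf₀ : ∀ i b, 0 ≤ f i b) (hf : ∀ i, Summable (f i)) :
    Summable fun x : ι → β ↦ ∏ i, f i (x i) := by
  classical
  have hprod₀ : ∀ x : ι → β, 0 ≤ ∏ i, f i (x i) := fun x ↦ prod_nonneg fun i _ ↦ hf₀ i (x i)
  refine summable_of_sum_le (c := ∏ i, ∑' b, f i b) hprod₀ fun u ↦ ?_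
  calc ∑ x ∈ u, ∏ i, f i (x i)
      ≤ ∑ x ∈ Fintype.piFinset fun i ↦ u.image (· i), ∏ i, f i (x i) :=
        sum_le_sum_of_subset_of_nonneg
          (fun x hx ↦ Fintype.mem_piFinset.2 fun i ↦ mem_image_of_mem _ hx)
          fun x _ _ ↦ hprod₀ x
    _ = ∏ i, ∑ b ∈ u.image (· i), f i b := (prod_univ_sum _ _).symm
    _ ≤ ∏ i, ∑' b, f i b :=
        prod_le_prod (fun i _ ↦ sum_nonneg fun b _ ↦ hf₀ i b)
          fun i _ ↦ (hf i).sum_le_tsum _ fun b _ ↦ hf₀ i b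

theorem Fin.eq_of_forall_castSucc_lt_iff {r : ℕ} {p q : Fin (r + 1)}
    (h : ∀ j : Fin r, j.castSucc < p ↔ j.castSucc < q) : p = q := by
  by_contra hne
  wlog hpq : p < q generalizing p q
  · exact this (fun j ↦ (h j).symm) (Ne.symm hne) ((not_lt.1 hpq).lt_of_ne (Ne.symm hne))
  have := (h (p.castPred (Fin.ne_last_of_lt hpq))).2 (by simpa using hpq)
  simp at this

theorem Monotone.exists_castSucc_lt_iff {α : Type*} [LinearOrder α] {r : ℕ} {m : Fin r → α}
    (hm : Monotone m) (a : α) : ∃ p : Fin (r + 1), ∀ j, m j < a ↔ j.castSucc < p := by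
  refine ⟨⟨#{k | m k < a}, Nat.lt_succ_of_le ((card_filter_le _ _).trans_eq (card_fin r))⟩,
    fun j ↦ ⟨fun hj ↦ ?_, fun hj ↦ ?_⟩⟩
  · have hsub : Iic j ⊆ ({k | m k < a} : Finset _) := fun k hk ↦
      mem_filter.2 ⟨mem_univ k, (hm (mem_Iic.1 hk)).trans_lt hj⟩
    have := card_le_card hsub
    rw [Fin.card_Iic] at this
    exact Fin.lt_def.2 (by simpa using this)
  · by_contra hja
    have hsub : ({k | m k < a} : Finset _) ⊆ Iio j := fun k hk ↦
      mem_Iio.2 (lt_of_not_ge fun hjk ↦ hja ((hm hjk).trans_lt (mem_filter.1 hk).2))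
    have := card_le_card hsub
    rw [Fin.card_Iio] at this
    rw [Fin.lt_def, Fin.val_castSucc] at hj
    exact absurd hj (not_lt.2 this)

theorem StrictMono.insertNth {α : Type*} [LinearOrder α] {r : ℕ} {m : Fin r → α}
    (hm : StrictMono m) {a : α} (ha : ∀ j, m j ≠ a) {p : Fin (r + 1)}
    (hp : ∀ j, m j < a ↔ j.castSucc < p) : StrictMono (p.insertNth a m) := by
  have above : ∀ j, p ≤ j.castSucc → a < m j := fun j hj ↦
    ((not_lt.1 fun h ↦ (hj.trans_lt ((hp j).1 h)).false)).lt_of_ne' (ha j)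
  intro k l hkl
  rcases Fin.eq_self_or_eq_succAbove p k with rfl | ⟨j, rfl⟩
  · obtain ⟨j', rfl⟩ := Fin.exists_succAbove_eq (Fin.ne_of_gt hkl)
    simpa using above j' ((Fin.lt_succAbove_iff_le_castSucc _ _).1 hkl)
  rcases Fin.eq_self_or_eq_succAbove p l with rfl | ⟨j', rfl⟩
  · simpa using (hp j).2 ((Fin.succAbove_lt_iff_castSucc_lt _ _).1 hkl)
  · simpa using hm (Fin.succAbove_lt_succAbove_iff.1 hkl)

abbrev IncTuple (r : ℕ) := {m : Fin r → ℕ // StrictMono m}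

namespace IncTuple

variable {r : ℕ}

def ofGaps (g : Fin r → ℕ) : IncTuple r :=
  ⟨fun k ↦ ∑ i ∈ Iic k, g i + k,
    fun _ _ hkl ↦ add_lt_add_of_le_of_lt (sum_le_sum_of_subset (Iic_subset_Iic.2 hkl.le)) hkl⟩

theorem ofGaps_zero (g : Fin (r + 1) → ℕ) : (ofGaps g).1 0 = g 0 := by
  show ∑ i ∈ Iic 0, g i + ((0 : Fin (r + 1)) : ℕ) = g 0
  rw [← bot_eq_zero, Iic_bot, sum_singleton]
  rfl

theorem ofGaps_succ (g : Fin (r + 1) → ℕ) (i : Fin r) :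
    (ofGaps g).1 i.succ = (ofGaps g).1 i.castSucc + g i.succ + 1 := by
  have hIic : Iic i.succ = insert i.succ (Iic i.castSucc) := by
    ext j
    simp only [mem_Iic, mem_insert, Fin.le_def, Fin.ext_iff, Fin.val_succ, Fin.val_castSucc]
    omega
  simp only [ofGaps, hIic, sum_insert (by simp [Fin.le_def] : i.succ ∉ Iic i.castSucc),
    Fin.val_succ, Fin.val_castSucc]
  ring

def toGaps (m : Fin (r + 1) → ℕ) : Fin (r + 1) → ℕ :=
  Fin.cases (m 0) fun i ↦ m i.succ - m i.castSucc - 1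

def gapsEquiv : (Fin (r + 1) → ℕ) ≃ IncTuple (r + 1) where
  toFun := ofGaps
  invFun m := toGaps m.1
  left_inv g := funext fun k ↦ by
    cases k using Fin.cases with
    | zero => simp [toGaps, ofGaps_zero]
    | succ i => simp only [toGaps, Fin.cases_succ, ofGaps_succ]; omega
  right_inv m := Subtype.ext <| funext fun k ↦ by
    induction k using Fin.induction with
    | zero => simp [ofGaps_zero, toGaps]
    | succ i ih =>
      have := m.2 i.castSucc_lt_succ
      simp only [ofGaps_succ, ih, toGaps, Fin.cases_succ]
      omega

def removeNth (p : Fin (r + 1)) (M : IncTuple (r + 1)) : IncTuple r :=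
  ⟨p.removeNth M.1, M.2.comp p.strictMono_succAbove⟩

theorem removeNth_apply_lt_iff (p : Fin (r + 1)) (M : IncTuple (r + 1)) (j : Fin r) :
    (M.removeNth p).1 j < M.1 p ↔ j.castSucc < p :=
  M.2.lt_iff_lt.trans (Fin.succAbove_lt_iff_castSucc_lt p j)

def stuffle : (Fin (r + 1) × IncTuple (r + 1)) ⊕ (Fin r × IncTuple r) → ℕ × IncTuple r
  | .inl (p, M) => (M.1 p, M.removeNth p)
  | .inr (i, m) => (m.1 i, m)

theorem stuffle_injective : Function.Injective (stuffle (r := r)) := by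
  rintro (⟨p, M⟩ | ⟨i, m⟩) (⟨p', M'⟩ | ⟨i', m'⟩) h <;>
    simp only [stuffle, Prod.mk.injEq] at h <;> obtain ⟨ha, hm⟩ := h
  · have hp : p = p' := Fin.eq_of_forall_castSucc_lt_iff fun j ↦ by
      rw [← removeNth_apply_lt_iff, ← removeNth_apply_lt_iff, hm, ha]
    subst hp
    have hM : M.1 = M'.1 := by
      rw [← Fin.insertNth_self_removeNth p M.1, ← Fin.insertNth_self_removeNth p M'.1, ha]
      exact congrArg (fun m : IncTuple r ↦ p.insertNth (α := fun _ ↦ ℕ) (M'.1 p) m.1) hm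
    rw [Subtype.ext hM]
  · subst hm
    exact absurd (M.2.injective ha).symm (p.succAbove_ne i')
  · subst hm
    exact absurd (M'.2.injective ha.symm).symm (p'.succAbove_ne i)
  · subst hm
    rw [m.2.injective ha]

theorem stuffle_surjective : Function.Surjective (stuffle (r := r)) := by
  rintro ⟨a, m⟩
  by_cases ha : ∃ i, m.1 i = a
  · obtain ⟨i, rfl⟩ := ha
    exact ⟨.inr (i, m), rfl⟩
  simp only [not_exists] at ha
  obtain ⟨p, hp⟩ := m.2.monotone.exists_castSucc_lt_iff a
  refine ⟨.inl (p, ⟨p.insertNth a m.1, m.2.insertNth ha hp⟩), ?_⟩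
  simp [stuffle, removeNth]

noncomputable def stuffleEquiv :
    (Fin (r + 1) × IncTuple (r + 1)) ⊕ (Fin r × IncTuple r) ≃ ℕ × IncTuple r :=
  .ofBijective stuffle ⟨stuffle_injective, stuffle_surjective⟩

theorem tsum_eq_sum_tsum_add_sum_tsum {E : Type*} [NormedAddCommGroup E] [CompleteSpace E]
    {f : ℕ × IncTuple r → E} (hf : Summable f) :
    ∑' x, f x = (∑ p, ∑' M : IncTuple (r + 1), f (M.1 p, M.removeNth p)) +
      ∑ i, ∑' m : IncTuple r, f (m.1 i, m) := by
  have hs := stuffleEquiv.summable_iff.2 hf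
  have hinl : Summable fun x : Fin (r + 1) × IncTuple (r + 1) ↦ f (stuffleEquiv (.inl x)) :=
    hs.comp_injective Sum.inl_injective
  have hinr : Summable fun x : Fin r × IncTuple r ↦ f (stuffleEquiv (.inr x)) :=
    hs.comp_injective Sum.inr_injective
  rw [← stuffleEquiv.tsum_eq f, Summable.tsum_sum (f := fun c ↦ f (stuffleEquiv c)) hinl hinr,
    hinl.tsum_prod, hinr.tsum_prod, tsum_fintype, tsum_fintype]
  rfl

end IncTuple

theorem norm_natCast_add_one_cpow_neg (a : ℕ) (s : ℂ) :
    ‖((a : ℂ) + 1) ^ (-s)‖ = ((a : ℝ) + 1) ^ (-s.re) := by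
  simpa using Complex.norm_natCast_cpow_of_pos a.succ_pos (-s)

theorem summable_natCast_add_one_rpow_neg {σ : ℝ} (hσ : 1 < σ) :
    Summable fun a : ℕ ↦ ((a : ℝ) + 1) ^ (-σ) := by
  simpa using (summable_nat_add_iff 1).2 (Real.summable_nat_rpow.2 (neg_lt_neg hσ))

theorem riemannZeta_eq_tsum_natCast_add_one_cpow_neg {s : ℂ} (hs : 1 < s.re) :
    riemannZeta s = ∑' a : ℕ, ((a : ℂ) + 1) ^ (-s) := by
  simp [zeta_eq_tsum_one_div_nat_add_one_cpow hs, Complex.cpow_neg]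

/-- The term of `ζ_r(s)` at the index `m₁ + 1 < ⋯ < m_r + 1`. -/
noncomputable def ezTerm {r : ℕ} (s : Fin r → ℂ) (m : Fin r → ℕ) : ℂ :=
  ∏ k, ((m k : ℂ) + 1) ^ (-s k)

section ezTerm

variable {r : ℕ}

theorem summable_norm_ezTerm {s : Fin r → ℂ} (hs : ∀ k, 1 < (s k).re) :
    Summable fun m : Fin r → ℕ ↦ ‖ezTerm s m‖ := by
  simp only [ezTerm, norm_prod, norm_natCast_add_one_cpow_neg]
  exact summable_prod_apply_of_nonneg (f := fun k (a : ℕ) ↦ ((a : ℝ) + 1) ^ (-(s k).re))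
    (fun _ _ ↦ by positivity) fun k ↦ summable_natCast_add_one_rpow_neg (hs k)

theorem ez_eq_tsum_ezTerm (s : Fin (r + 1) → ℂ) :
    ez (r + 1) s = ∑' m : IncTuple (r + 1), ezTerm s m.1 := by
  rw [← IncTuple.gapsEquiv.tsum_eq]
  refine tsum_congr fun g ↦ ?_
  change _ = ∏ k, (((∑ i ∈ Iic k, g i + k : ℕ) : ℂ) + 1) ^ (-s k)
  push_cast
  rfl

theorem ezTerm_insertNth (s₁ : ℂ) (t : Fin r → ℂ) (p : Fin (r + 1)) (M : Fin (r + 1) → ℕ) :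
    ezTerm (p.insertNth s₁ t) M = ((M p : ℂ) + 1) ^ (-s₁) * ezTerm t (p.removeNth M) := by
  simp [ezTerm, Fin.prod_univ_succAbove _ p, Fin.removeNth]

theorem ezTerm_update_add (s₁ : ℂ) (t : Fin r → ℂ) (i : Fin r) (m : Fin r → ℕ) :
    ezTerm (Function.update t i (s₁ + t i)) m = ((m i : ℂ) + 1) ^ (-s₁) * ezTerm t m := by
  have hne : (m i : ℂ) + 1 ≠ 0 := by exact_mod_cast (m i).succ_ne_zero
  classical
  rw [ezTerm, ezTerm, Fintype.prod_eq_mul_prod_compl i, Fintype.prod_eq_mul_prod_compl i,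
    Function.update_self, neg_add, Complex.cpow_add _ _ hne, mul_assoc]
  congr 2
  refine prod_congr rfl fun k hk ↦ ?_
  rw [Function.update_of_ne (by simpa using hk)]

end ezTerm

/-- Harmonic product decomposition (here `r = n + 2 ≥ 2`, and `t = (s₂,…,s_r)`):
`ζ(s₁) ζ_{r−1}(s₂,…,s_r)` equals the sum over all `r` ways to insert `s₁` into the
tuple `(s₂,…,s_r)` (giving `ζ_r` terms) plus the sum over the `r − 1` ways to merge
`s₁` with one entry `s_i` (giving `ζ_{r−1}` terms with `s_i` replaced by `s₁ + s_i`). -/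
theorem harmonic_product_r (n : ℕ) (s₁ : ℂ) (t : Fin (n + 1) → ℂ)
    (h₁ : 1 < s₁.re) (ht : ∀ i, 1 < (t i).re) :
    riemannZeta s₁ * ez (n + 1) t =
      (∑ p : Fin (n + 2), ez (n + 2) (p.insertNth s₁ t)) +
      ∑ i : Fin (n + 1), ez (n + 1) (Function.update t i (s₁ + t i)) := by
  have hζ : Summable fun a : ℕ ↦ ‖((a : ℂ) + 1) ^ (-s₁)‖ := by
    simpa only [norm_natCast_add_one_cpow_neg] using summable_natCast_add_one_rpow_neg h₁
  have hez : Summable fun m : IncTuple (n + 1) ↦ ‖ezTerm t m.1‖ :=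
    (summable_norm_ezTerm ht).comp_injective Subtype.val_injective
  have hprod : Summable fun x : ℕ × IncTuple (n + 1) ↦ ((x.1 : ℂ) + 1) ^ (-s₁) * ezTerm t x.2.1 :=
    (summable_mul_of_summable_norm hζ hez :)
  rw [riemannZeta_eq_tsum_natCast_add_one_cpow_neg h₁, ez_eq_tsum_ezTerm,
    tsum_mul_tsum_of_summable_norm hζ hez, IncTuple.tsum_eq_sum_tsum_add_sum_tsum hprod]
  congr 1 <;> refine sum_congr rfl fun j _ ↦ ?_ <;> rw [ez_eq_tsum_ezTerm]
  · exact tsum_congr fun M ↦ (ezTerm_insertNth s₁ t j M.1).symm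
  · exact tsum_congr fun m ↦ (ezTerm_update_add s₁ t j m.1).symm
end

section
/- Let r ≥ 2 and let (s₁^{(m)},…,s_r^{(m)}) be a sequence of zeros of ζ_r (i.e. ζ_r(s₁^{(m)},…,s_r^{(m)}) = 0) with all coordinates of real part > 1, with Re(s₁^{(m)}) → +∞ and (s₂^{(m)},…,s_r^{(m)}) lying in a compact subset of {Re > 1}^{r−1}. Then every limit point (ρ₂,…,ρ_r) of the sequence (s₂^{(m)},…,s_r^{(m)}) satisfies F_{r−1}(ρ₂,…,ρ_r) = 0, where F_{r−1}(s₂,…,s_r) = Σ_{j=1}^{r−1} (−1)^{r−j+1} ζ_j(s_{r−j+1},…,s_r) − (−1)^r. -/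
noncomputable def Fpoly (q : ℕ) (t : Fin q → ℂ) : ℂ :=
  (∑ j ∈ (Finset.Icc 1 q).attach,
      (-1 : ℂ) ^ (q - j.1 + 2) *
        ez j.1 (fun k => t ⟨q - j.1 + k.1, by
          have h1 := j.2
          have h2 := k.isLt
          simp only [Finset.mem_Icc] at h1
          omega⟩)) -
    (-1 : ℂ) ^ (q + 1)

/-!
Let `ezAbove a t` be the Euler–Zagier sum restricted to indices `a < m₀ < ⋯ < m_{q-1}`.
Separating the terms with `m₀ = a + 1` gives
`ezAbove a t = (a + 1) ^ (-t 0) * ezAbove (a + 1) (tail t) + ezAbove (a + 1) t`.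
For `a = 0` this is `ζ_q(t) = ezAbove 1 (tail t) + ezAbove 1 t`, which telescopes to
`F_q = ezAbove 1` on `{Re > 1}^q`, and at a zero of `ζ_r` it gives
`F_{r-1}(s₂, …, s_r) = -ezAbove 1 (s₁, …, s_r)`. While all `Re s_k` stay above some `τ > 1`
(which holds eventually near a limit point in `{Re > 1}^{r-1}`), the right-hand side is
`O(2 ^ (-Re s₁))`, so it tends to `0`; continuity of `ezAbove 1` at the limit point concludes.
-/

open Filter Topology

variable {q : ℕ}

/-- `ezAbove a t = ∑_{a < m₀ < ⋯ < m_{q-1}} ∏ m_k ^ (-t k)`, indexed by the gaps `n` through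
`m_k = a + ∑_{i ≤ k} n i + k + 1`, as in `ez`. -/
noncomputable def ezAboveTerm (a : ℕ) (t : Fin q → ℂ) (n : Fin q → ℕ) : ℂ :=
  ∏ k, ((a + ∑ i ∈ Finset.Iic k, n i + k + 1 : ℕ) : ℂ) ^ (-t k)

noncomputable def ezAbove (a : ℕ) (t : Fin q → ℂ) : ℂ :=
  ∑' n, ezAboveTerm a t n

lemma ez_eq_ezAbove_zero (t : Fin q → ℂ) : ez q t = ezAbove 0 t := by
  refine tsum_congr fun n => Finset.prod_congr rfl fun k _ => ?_
  push_cast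
  ring_nf

lemma ezAbove_of_fin_zero (a : ℕ) (t : Fin 0 → ℂ) : ezAbove a t = 1 := by
  simp [ezAbove, ezAboveTerm]

lemma exists_one_lt_forall_lt_re {t : Fin q → ℂ} (h : ∀ k, 1 < (t k).re) :
    ∃ τ : ℝ, 1 < τ ∧ ∀ k, τ < (t k).re :=
  ((eventually_mem_nhdsWithin (a := (1 : ℝ)) (s := Set.Ioi 1)).and (eventually_all.2 fun k =>
    eventually_nhdsWithin_of_eventually_nhds (eventually_lt_nhds (h k)))).exists

lemma isOpen_setOf_forall_lt_re (τ : ℝ) : IsOpen {t : Fin q → ℂ | ∀ k, τ < (t k).re} := by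
  simp only [Set.ofPred_forall]
  exact isOpen_iInter_of_finite fun k =>
    isOpen_lt continuous_const (Complex.continuous_re.comp (continuous_apply k))

lemma summable_prod_add_one_rpow_neg {τ : ℝ} (hτ : 1 < τ) :
    Summable fun n : Fin q → ℕ => ∏ k, ((n k : ℝ) + 1) ^ (-τ) := by
  induction q with
  | zero => exact Summable.of_finite
  | succ q ih =>
    have h1 : Summable fun c : ℕ => ((c : ℝ) + 1) ^ (-τ) := by
      simpa using (summable_nat_add_iff 1).2 (Real.summable_nat_rpow.2 (by linarith : -τ < -1))
    refine (Fin.consEquiv fun _ => ℕ).summable_iff.1 ?_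
    refine (h1.mul_of_nonneg ih (fun _ => by positivity) fun _ => by positivity).congr fun p => ?_
    simp [Fin.prod_univ_succ]

lemma norm_natCast_cpow_neg_le {b N n : ℕ} {s : ℂ} {τ : ℝ} (hτ : 0 ≤ τ) (hs : τ ≤ s.re)
    (hb : 1 ≤ b) (hbN : b ≤ N) (hnN : n + 1 ≤ N) :
    ‖(N : ℂ) ^ (-s)‖ ≤ (b : ℝ) ^ (τ - s.re) * ((n : ℝ) + 1) ^ (-τ) := by
  have hb' : (1 : ℝ) ≤ b := by exact_mod_cast hb
  have hN : (0 : ℝ) < N := by exact_mod_cast (show 0 < N by omega)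
  rw [Complex.norm_natCast_cpow_of_pos (by omega), Complex.neg_re,
    show -s.re = (τ - s.re) + -τ by ring, Real.rpow_add hN]
  exact mul_le_mul_of_nonneg
    (Real.rpow_le_rpow_of_nonpos (by positivity) (by exact_mod_cast hbN) (by linarith))
    (Real.rpow_le_rpow_of_nonpos (by positivity) (by exact_mod_cast hnN) (by linarith))
    (by positivity) (by positivity)

section Bounds

variable {a : ℕ} {τ : ℝ}

lemma norm_ezAboveTerm_factor_le {t : Fin q → ℂ} (hτ : 0 ≤ τ) (n : Fin q → ℕ) {k : Fin q}
    (hk : τ ≤ (t k).re) :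
    ‖((a + ∑ i ∈ Finset.Iic k, n i + k + 1 : ℕ) : ℂ) ^ (-t k)‖
      ≤ ((a : ℝ) + 1) ^ (τ - (t k).re) * ((n k : ℝ) + 1) ^ (-τ) := by
  have hnk : n k ≤ ∑ i ∈ Finset.Iic k, n i :=
    Finset.single_le_sum (fun i _ => Nat.zero_le _) (Finset.mem_Iic.2 le_rfl)
  exact_mod_cast norm_natCast_cpow_neg_le (b := a + 1) hτ hk (by omega) (by omega) (by omega)

lemma norm_ezAboveTerm_factor_le' {t : Fin q → ℂ} (hτ : 0 ≤ τ) (n : Fin q → ℕ) {k : Fin q}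
    (hk : τ ≤ (t k).re) :
    ‖((a + ∑ i ∈ Finset.Iic k, n i + k + 1 : ℕ) : ℂ) ^ (-t k)‖ ≤ ((n k : ℝ) + 1) ^ (-τ) := by
  refine (norm_ezAboveTerm_factor_le hτ n hk).trans (mul_le_of_le_one_left (by positivity) ?_)
  exact Real.rpow_le_one_of_one_le_of_nonpos (by linarith [a.cast_nonneg (α := ℝ)])
    (by linarith)

lemma norm_ezAboveTerm_le {t : Fin q → ℂ} (hτ : 0 ≤ τ) (h : ∀ k, τ ≤ (t k).re)
    (n : Fin q → ℕ) : ‖ezAboveTerm a t n‖ ≤ ∏ k, ((n k : ℝ) + 1) ^ (-τ) := by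
  rw [ezAboveTerm, norm_prod]
  exact Finset.prod_le_prod (fun _ _ => norm_nonneg _) fun k _ =>
    norm_ezAboveTerm_factor_le' hτ n (h k)

lemma norm_ezAboveTerm_le_mul {t : Fin (q + 1) → ℂ} (hτ : 0 ≤ τ) (h : ∀ k, τ ≤ (t k).re)
    (n : Fin (q + 1) → ℕ) :
    ‖ezAboveTerm a t n‖ ≤ ((a : ℝ) + 1) ^ (τ - (t 0).re) * ∏ k, ((n k : ℝ) + 1) ^ (-τ) := by
  rw [ezAboveTerm, norm_prod, Fin.prod_univ_succ, Fin.prod_univ_succ, ← mul_assoc]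
  exact mul_le_mul (norm_ezAboveTerm_factor_le hτ n (h 0))
    (Finset.prod_le_prod (fun _ _ => norm_nonneg _) fun k _ =>
      norm_ezAboveTerm_factor_le' hτ n (h k.succ))
    (by positivity) (by positivity)

lemma norm_ezAbove_le {t : Fin (q + 1) → ℂ} (hτ : 1 < τ) (h : ∀ k, τ ≤ (t k).re) :
    ‖ezAbove a t‖ ≤
      ((a : ℝ) + 1) ^ (τ - (t 0).re) * ∑' n : Fin (q + 1) → ℕ, ∏ k, ((n k : ℝ) + 1) ^ (-τ) :=
  tsum_of_norm_bounded ((summable_prod_add_one_rpow_neg hτ).hasSum.mul_left _)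
    (norm_ezAboveTerm_le_mul (by linarith) h)

lemma summable_ezAboveTerm (a : ℕ) {t : Fin q → ℂ} (h : ∀ k, 1 < (t k).re) :
    Summable (ezAboveTerm a t) := by
  obtain ⟨τ, hτ, hτt⟩ := exists_one_lt_forall_lt_re h
  exact Summable.of_norm_bounded (summable_prod_add_one_rpow_neg hτ)
    (norm_ezAboveTerm_le (by linarith) fun k => (hτt k).le)

lemma continuousAt_ezAbove (a : ℕ) {t : Fin q → ℂ} (h : ∀ k, 1 < (t k).re) :
    ContinuousAt (ezAbove a) t := by
  obtain ⟨τ, hτ, hτt⟩ := exists_one_lt_forall_lt_re h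
  refine (continuousOn_tsum (fun n => ?_) (summable_prod_add_one_rpow_neg hτ)
    fun n u hu => norm_ezAboveTerm_le (by linarith) (fun k => (hu k).le) n).continuousAt
    ((isOpen_setOf_forall_lt_re τ).mem_nhds hτt)
  refine (continuous_finsetProd _ fun k _ => ?_).continuousOn
  exact (continuous_apply k).neg.const_cpow (Or.inl (Nat.cast_ne_zero.2 (by omega)))

end Bounds

lemma Fin.sum_Iic_succ {M : Type*} [AddCommMonoid M] (f : Fin (q + 1) → M) (j : Fin q) :
    ∑ i ∈ Finset.Iic j.succ, f i = f 0 + ∑ i ∈ Finset.Iic j, f i.succ := by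
  rw [← Finset.Icc_bot, Finset.Icc_eq_cons_Ioc bot_le, Finset.sum_cons, bot_eq_zero,
    ← Fin.map_succEmb_Iic, Finset.sum_map]
  rfl

lemma ezAboveTerm_cons (a c : ℕ) (t : Fin (q + 1) → ℂ) (n : Fin q → ℕ) :
    ezAboveTerm a t (Fin.cons c n) =
      ((a + c + 1 : ℕ) : ℂ) ^ (-t 0) * ezAboveTerm (a + c + 1) (Fin.tail t) n := by
  rw [ezAboveTerm, Fin.prod_univ_succ]
  congr 1
  refine Finset.prod_congr rfl fun j _ => ?_
  rw [Fin.sum_Iic_succ, Fin.val_succ]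
  simp only [Fin.cons_zero, Fin.cons_succ, Fin.tail]
  congr 2
  omega

lemma hasSum_ezAbove_cons (a : ℕ) {t : Fin (q + 1) → ℂ} (h : ∀ k, 1 < (t k).re) :
    HasSum (fun c : ℕ => ((a + c + 1 : ℕ) : ℂ) ^ (-t 0) * ezAbove (a + c + 1) (Fin.tail t))
      (ezAbove a t) := by
  have hcons : HasSum (ezAboveTerm a t ∘ Fin.consEquiv fun _ => ℕ) (ezAbove a t) :=
    (Fin.consEquiv _).hasSum_iff.2 (summable_ezAboveTerm a h).hasSum
  refine hcons.prod_fiberwise fun c => ?_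
  refine (((summable_ezAboveTerm _ fun k => h k.succ).hasSum).mul_left _).congr_fun fun n => ?_
  exact ezAboveTerm_cons a c t n

lemma ezAbove_eq_add (a : ℕ) {t : Fin (q + 1) → ℂ} (h : ∀ k, 1 < (t k).re) :
    ezAbove a t =
      ((a + 1 : ℕ) : ℂ) ^ (-t 0) * ezAbove (a + 1) (Fin.tail t) + ezAbove (a + 1) t := by
  rw [← (hasSum_ezAbove_cons a h).tsum_eq, (hasSum_ezAbove_cons a h).summable.tsum_eq_zero_add,
    ← (hasSum_ezAbove_cons (a + 1) h).tsum_eq]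
  congr 1
  refine tsum_congr fun c => ?_
  rw [show a + (c + 1) + 1 = a + 1 + c + 1 by omega]

lemma ezAbove_one_tail {t : Fin (q + 1) → ℂ} (h : ∀ k, 1 < (t k).re) :
    ezAbove 1 (Fin.tail t) = ez (q + 1) t - ezAbove 1 t := by
  rw [ez_eq_ezAbove_zero, ezAbove_eq_add 0 h]
  simp

/-- Reading the coordinates of `t` through `ℕ` frees the summand from the proof of
`j ∈ Finset.Icc 1 q`. -/
lemma Fpoly_eq_sum_Icc (t : Fin q → ℂ) :
    Fpoly q t = (∑ j ∈ Finset.Icc 1 q, (-1 : ℂ) ^ (q - j + 2) *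
        ez j (fun k => Function.extend Fin.val t 0 (q - j + k))) - (-1 : ℂ) ^ (q + 1) := by
  rw [Fpoly, ← Finset.sum_attach (Finset.Icc 1 q)]
  congr 1
  refine Finset.sum_congr rfl fun j _ => ?_
  congr 2
  funext k
  exact (Fin.val_injective.extend_apply t 0 _).symm

lemma Fpoly_zero (t : Fin 0 → ℂ) : Fpoly 0 t = 1 := by
  simp [Fpoly_eq_sum_Icc]

lemma Fpoly_succ (t : Fin (q + 1) → ℂ) :
    Fpoly (q + 1) t = ez (q + 1) t - Fpoly q (Fin.tail t) := by
  have hsum : ∑ j ∈ Finset.Icc 1 q, (-1 : ℂ) ^ (q + 1 - j + 2) *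
        ez j (fun k => Function.extend Fin.val t 0 (q + 1 - j + k))
      = -∑ j ∈ Finset.Icc 1 q, (-1 : ℂ) ^ (q - j + 2) *
        ez j (fun k => Function.extend Fin.val (Fin.tail t) 0 (q - j + k)) := by
    rw [← Finset.sum_neg_distrib]
    refine Finset.sum_congr rfl fun j hj => ?_
    have hjq := (Finset.mem_Icc.1 hj).2
    have htail : (fun k : Fin j => Function.extend Fin.val t 0 (q + 1 - j + k))
        = fun k : Fin j => Function.extend Fin.val (Fin.tail t) 0 (q - j + k) := by
      funext k
      have hk : q - j + k < q := by omega
      have hk' : q + 1 - j + k < q + 1 := by omega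
      rw [Fin.val_injective.extend_apply t 0 ⟨_, hk'⟩,
        Fin.val_injective.extend_apply (Fin.tail t) 0 ⟨_, hk⟩]
      exact congrArg t (Fin.ext (by simp only [Fin.val_succ]; omega))
    rw [htail, show q + 1 - j + 2 = q - j + 2 + 1 by omega, pow_succ]
    ring
  rw [Fpoly_eq_sum_Icc, Fpoly_eq_sum_Icc, Finset.sum_Icc_succ_top (Nat.le_add_left 1 q), hsum]
  simp only [Nat.sub_self, zero_add, Fin.val_injective.extend_apply, pow_succ]
  ring

lemma Fpoly_eq_ezAbove_one {t : Fin q → ℂ} (h : ∀ k, 1 < (t k).re) : Fpoly q t = ezAbove 1 t := by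
  induction q with
  | zero => rw [Fpoly_zero, ezAbove_of_fin_zero]
  | succ q ih =>
    rw [Fpoly_succ, ih (t := Fin.tail t) fun k => h k.succ, ezAbove_one_tail h, sub_sub_cancel]

lemma tendsto_ezAbove_nhds_zero {ι : Type*} {l : Filter ι} {a : ℕ} (ha : 1 ≤ a)
    {u : ι → Fin (q + 1) → ℂ} {τ : ℝ} (hτ : 1 < τ) (hu : ∀ᶠ i in l, ∀ k, τ ≤ (u i k).re)
    (hu0 : Tendsto (fun i => (u i 0).re) l atTop) :
    Tendsto (fun i => ezAbove a (u i)) l (𝓝 0) := by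
  set C := ∑' n : Fin (q + 1) → ℕ, ∏ k, ((n k : ℝ) + 1) ^ (-τ)
  have hexp : Tendsto (fun i => τ - (u i 0).re) l atBot := by
    simpa [sub_eq_add_neg] using tendsto_atBot_add_const_left l τ (tendsto_neg_atTop_atBot.comp hu0)
  have hbase : (1 : ℝ) < a + 1 := by
    have : (1 : ℝ) ≤ a := by exact_mod_cast ha
    linarith
  have hdecay : Tendsto (fun i => ((a : ℝ) + 1) ^ (τ - (u i 0).re) * C) l (𝓝 0) := by
    simpa using ((tendsto_rpow_atBot_of_base_gt_one _ hbase).comp hexp).mul_const C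
  exact squeeze_zero_norm' (hu.mono fun i hi => norm_ezAbove_le hτ hi) hdecay

theorem limit_points_on_hypersurface_general (m : ℕ) (s : ℕ → Fin (m + 2) → ℂ)
    (hzero : ∀ j, ez (m + 2) (s j) = 0)
    (htend : Filter.Tendsto (fun j => (s j 0).re) Filter.atTop Filter.atTop)
    (K : Set (Fin (m + 1) → ℂ)) (hK : IsCompact K)
    (hK1 : K ⊆ {t : Fin (m + 1) → ℂ | ∀ k, 1 < (t k).re})
    (hmem : ∀ j, (fun k => s j k.succ) ∈ K) :
    ∀ ρ : Fin (m + 1) → ℂ,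
      (∃ φ : ℕ → ℕ, StrictMono φ ∧
        Filter.Tendsto (fun j => fun k => s (φ j) k.succ) Filter.atTop (nhds ρ)) →
      Fpoly (m + 1) ρ = 0 := by
  rintro ρ ⟨φ, hφ, hconv⟩
  have hρ : ∀ k, 1 < (ρ k).re :=
    hK1 (hK.isClosed.mem_of_tendsto hconv (Eventually.of_forall fun j => hmem (φ j)))
  obtain ⟨τ, hτ, hρτ⟩ := exists_one_lt_forall_lt_re hρ
  have hhead : Tendsto (fun j => (s (φ j) 0).re) atTop atTop := htend.comp hφ.tendsto_atTop
  have hbox : ∀ᶠ j in atTop, ∀ k, τ ≤ (s (φ j) k).re := by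
    filter_upwards [hconv.eventually ((isOpen_setOf_forall_lt_re τ).mem_nhds hρτ),
      hhead.eventually_ge_atTop τ] with j htail h0
    exact Fin.cases h0 fun k => (htail k).le
  have hlim : Tendsto (fun j => ezAbove 1 (fun k => s (φ j) k.succ)) atTop (𝓝 0) := by
    refine (neg_zero (G := ℂ) ▸ (tendsto_ezAbove_nhds_zero le_rfl hτ hbox hhead).neg).congr' ?_
    filter_upwards [hbox] with j hj
    rw [← zero_sub, ← hzero (φ j), ← ezAbove_one_tail fun k => hτ.trans_le (hj k)]
    rfl
  rw [Fpoly_eq_ezAbove_one hρ]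
  exact tendsto_nhds_unique ((continuousAt_ezAbove 1 hρ).tendsto.comp hconv) hlim

/-- Let `r = m + 2 ≥ 2`. If `(s₁⁽ʲ⁾,…,s_r⁽ʲ⁾)` are zeros of `ζ_r` with all coordinates of
real part `> 1`, `Re s₁⁽ʲ⁾ → +∞`, and `(s₂⁽ʲ⁾,…,s_r⁽ʲ⁾)` lying in a compact subset of
`{Re > 1}^{r−1}`, then every limit point `(ρ₂,…,ρ_r)` of `(s₂⁽ʲ⁾,…,s_r⁽ʲ⁾)` satisfies
`F_{r−1}(ρ₂,…,ρ_r) = 0`. -/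
theorem limit_points_on_hypersurface (m : ℕ) (s : ℕ → Fin (m + 2) → ℂ)
    (hzero : ∀ j, ez (m + 2) (s j) = 0)
    (hre : ∀ j k, 1 < (s j k).re)
    (htend : Filter.Tendsto (fun j => (s j 0).re) Filter.atTop Filter.atTop)
    (K : Set (Fin (m + 1) → ℂ)) (hK : IsCompact K)
    (hK1 : K ⊆ {t : Fin (m + 1) → ℂ | ∀ k, 1 < (t k).re})
    (hmem : ∀ j, (fun k => s j k.succ) ∈ K) :
    ∀ ρ : Fin (m + 1) → ℂ,
      (∃ φ : ℕ → ℕ, StrictMono φ ∧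
        Filter.Tendsto (fun j => fun k => s (φ j) k.succ) Filter.atTop (nhds ρ)) →
      Fpoly (m + 1) ρ = 0 :=
  limit_points_on_hypersurface_general m s hzero htend K hK hK1 hmem
end
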